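/- For x, y in the open unit ball of a complex Hilbert space, the pseudo-hyperbolic distance satisfies ρ_E(x,y) ≤ ‖x − y‖ / |1 − ⟨x, y⟩|. -/

import Mathlib

open scoped ComplexInnerProductSpace

/-!
Expanding both squares in terms of `a = ⟨x, y⟩` gives
`|1 - a|² - ‖x - y‖² - (1 - ‖x‖²)(1 - ‖y‖²) = |a|² - ‖x‖²‖y‖²`, which is `≤ 0` by Cauchy–Schwarz.
Hence `1 - (1 - ‖x‖²)(1 - ‖y‖²)/|1 - a|² ≤ ‖x - y‖²/|1 - a|²`, and on the open ball
`|1 - a| ≥ 1 - ‖x‖‖y‖ > 0`, so taking square roots gives the claim.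
-/

/-- The pseudo-hyperbolic metric on the unit ball of a complex Hilbert space, via
`ρ_E(x,y)² = 1 - (1-‖x‖²)(1-‖y‖²)/|1-⟨x,y⟩|²`.  (The paper's inner product `⟨x,y⟩`
is linear in the first variable, i.e. it is Mathlib's `⟪y, x⟫`.) -/
noncomputable def rhoE {E : Type*} [NormedAddCommGroup E] [InnerProductSpace ℂ E]
    (x y : E) : ℝ :=
  Real.sqrt (1 - (1 - ‖x‖ ^ 2) * (1 - ‖y‖ ^ 2) / ‖(1 - ⟪y, x⟫ : ℂ)‖ ^ 2)

section InnerProductSpace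

variable {𝕜 E : Type*} [RCLike 𝕜] [NormedAddCommGroup E] [InnerProductSpace 𝕜 E]

theorem norm_one_sub_inner_sq_le (x y : E) :
    ‖1 - inner 𝕜 y x‖ ^ 2 ≤ ‖x - y‖ ^ 2 + (1 - ‖x‖ ^ 2) * (1 - ‖y‖ ^ 2) := by
  set a := inner 𝕜 y x
  have h_one_sub : ‖1 - a‖ ^ 2 = 1 - 2 * RCLike.re a + ‖a‖ ^ 2 := by
    simpa [RCLike.inner_apply] using norm_sub_sq (𝕜 := 𝕜) (1 : 𝕜) a
  have h_sub : ‖x - y‖ ^ 2 = ‖x‖ ^ 2 - 2 * RCLike.re a + ‖y‖ ^ 2 := by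
    rw [norm_sub_sq (𝕜 := 𝕜), inner_re_symm]
  have h_cs : ‖a‖ ≤ ‖y‖ * ‖x‖ := norm_inner_le_norm y x
  rw [h_one_sub, h_sub]
  nlinarith [norm_nonneg a]

theorem norm_one_sub_inner_pos {x y : E} (hx : ‖x‖ < 1) (hy : ‖y‖ < 1) :
    0 < ‖1 - inner 𝕜 y x‖ := by
  have h_cs : ‖inner 𝕜 y x‖ ≤ ‖y‖ * ‖x‖ := norm_inner_le_norm y x
  have h_tri : 1 - ‖inner 𝕜 y x‖ ≤ ‖1 - inner 𝕜 y x‖ := by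
    simpa using norm_sub_norm_le (1 : 𝕜) (inner 𝕜 y x)
  nlinarith [norm_nonneg x, norm_nonneg y]

end InnerProductSpace

theorem Real.sqrt_one_sub_div_sq_le {d n p : ℝ} (hd : 0 < d) (hn : 0 ≤ n)
    (h : d ^ 2 ≤ n ^ 2 + p) : √(1 - p / d ^ 2) ≤ n / d := by
  have h_le : 1 - p / d ^ 2 ≤ (n / d) ^ 2 := by
    rw [div_pow, one_sub_div (by positivity)]
    gcongr
    linarith
  exact (Real.sqrt_le_sqrt h_le).trans_eq (Real.sqrt_sq (by positivity))

/-- `ρ_E(x,y) ≤ ‖x - y‖ / |1 - ⟨x,y⟩|` for `x, y` in the open unit ball. -/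
theorem rhoE_le {E : Type*} [NormedAddCommGroup E] [InnerProductSpace ℂ E]
    (x y : E) (hx : ‖x‖ < 1) (hy : ‖y‖ < 1) :
    rhoE x y ≤ ‖x - y‖ / ‖(1 - ⟪y, x⟫ : ℂ)‖ :=
  Real.sqrt_one_sub_div_sq_le (norm_one_sub_inner_pos hx hy) (norm_nonneg _)
    (norm_one_sub_inner_sq_le x y)
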